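/- arXiv:1304.6322 — 2 statements merged into one kernel-verified Lean document; each statement's English description precedes it below -/
import Mathlib

section
/- Let g be a continuously differentiable function on a compact interval [α, β] (k times continuously differentiable for a given k ∈ ℕ). Then there exists a sequence (f_n) of polynomials such that for every j = 0, …, k, the j-th derivatives f_n^{(j)} converge uniformly on [α, β] to g^{(j)}. -/
/-!
Induction on `k`. For `k = 0` this is the Weierstrass approximation theorem. For the inductive
step, approximate `g'` together with its first `k` derivatives by polynomials `q n`, and take
for `f n` the antiderivative of `q n` agreeing with `g` at the left endpoint `α`: the mean value
inequality turns `‖(f n)' - g'‖ ≤ δ` into `‖f n - g‖ ≤ δ (β - α)`.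
-/

open Polynomial Set Filter

namespace Polynomial

variable {K : Type*} [Field K]

noncomputable def antiderivative (p : K[X]) : K[X] :=
  p.sum fun n a => C (a / (n + 1)) * X ^ (n + 1)

theorem derivative_antiderivative [CharZero K] (p : K[X]) :
    derivative (antiderivative p) = p := by
  rw [antiderivative, Polynomial.sum, map_sum]
  conv_rhs => rw [← p.sum_C_mul_X_pow_eq, Polynomial.sum]
  refine Finset.sum_congr rfl fun n _ => ?_
  rw [derivative_C_mul, derivative_X_pow]
  push_cast
  rw [← mul_assoc, ← map_mul, div_mul_cancel₀ _ (Nat.cast_add_one_ne_zero n)]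

end Polynomial

theorem exists_seq_tendstoUniformlyOn_of_forall_dist_lt {ι X Y : Type*} [PseudoMetricSpace Y]
    {F : ι → X → Y} {g : X → Y} {s : Set X}
    (h : ∀ ε > 0, ∃ i, ∀ x ∈ s, dist (g x) (F i x) < ε) :
    ∃ u : ℕ → ι, TendstoUniformlyOn (fun n => F (u n)) g atTop s := by
  choose u hu using fun n : ℕ => h (1 / (n + 1)) (by positivity)
  refine ⟨u, Metric.tendstoUniformlyOn_iff.mpr fun ε hε => ?_⟩
  obtain ⟨N, hN⟩ := exists_nat_one_div_lt hε
  filter_upwards [eventually_ge_atTop N] with n hn x hx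
  calc dist (g x) (F (u n) x) < 1 / (n + 1) := hu n x hx
    _ ≤ 1 / (N + 1) := Nat.one_div_le_one_div hn
    _ < ε := hN

theorem exists_seq_polynomial_tendstoUniformlyOn {a b : ℝ} {g : ℝ → ℝ}
    (hg : ContinuousOn g (Icc a b)) :
    ∃ p : ℕ → ℝ[X], TendstoUniformlyOn (fun n x => (p n).eval x) g atTop (Icc a b) :=
  exists_seq_tendstoUniformlyOn_of_forall_dist_lt (F := fun (p : ℝ[X]) x => p.eval x) fun ε hε => by
    obtain ⟨p, hp⟩ := exists_polynomial_near_of_continuousOn a b g hg ε hε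
    exact ⟨p, fun x hx => by rw [dist_comm, Real.dist_eq]; exact hp x hx⟩

theorem tendstoUniformlyOn_Icc_of_hasDerivWithinAt {ι E : Type*} [NormedAddCommGroup E]
    [NormedSpace ℝ E] {l : Filter ι} {a b : ℝ} {F F' : ι → ℝ → E} {G G' : ℝ → E}
    (hF : ∀ i, ∀ x ∈ Icc a b, HasDerivWithinAt (F i) (F' i x) (Icc a b) x)
    (hG : ∀ x ∈ Icc a b, HasDerivWithinAt G (G' x) (Icc a b) x)
    (hF' : TendstoUniformlyOn F' G' l (Icc a b)) (hFa : ∀ i, F i a = G a) :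
    TendstoUniformlyOn F G l (Icc a b) := by
  rcases lt_or_ge b a with hba | hab
  · simpa [Icc_eq_empty_of_lt hba] using tendstoUniformlyOn_empty
  rw [Metric.tendstoUniformlyOn_iff] at hF' ⊢
  intro ε hε
  set δ := ε / (b - a + 1)
  have hδ : 0 < δ := div_pos hε (by linarith)
  filter_upwards [hF' δ hδ] with i hi x hx
  have hmvt := norm_image_sub_le_of_norm_deriv_le_segment'
    (f := F i - G) (fun y hy => (hF i y hy).sub (hG y hy))
    (fun y hy => by rw [← dist_eq_norm, dist_comm]; exact (hi y (Ico_subset_Icc_self hy)).le)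
    x hx
  calc dist (G x) (F i x) = ‖(F i - G) x - (F i - G) a‖ := by
        simp [hFa i, dist_eq_norm']
    _ ≤ δ * (x - a) := hmvt
    _ ≤ δ * (b - a) := by gcongr; exact hx.2
    _ < δ * (b - a + 1) := by linarith
    _ = ε := div_mul_cancel₀ ε (by linarith)

theorem exists_seq_polynomial_tendstoUniformlyOn_iteratedDerivWithin_succ {a b : ℝ} {k : ℕ}
    {g : ℝ → ℝ} (hg : DifferentiableOn ℝ g (Icc a b)) {q : ℕ → ℝ[X]}
    (hq : ∀ j ≤ k, TendstoUniformlyOn (fun n x => (derivative^[j] (q n)).eval x)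
      (iteratedDerivWithin j (derivWithin g (Icc a b)) (Icc a b)) atTop (Icc a b)) :
    ∃ f : ℕ → ℝ[X], ∀ j ≤ k + 1,
      TendstoUniformlyOn (fun n x => (derivative^[j] (f n)).eval x)
        (iteratedDerivWithin j g (Icc a b)) atTop (Icc a b) := by
  set f : ℕ → ℝ[X] := fun n => antiderivative (q n) + C (g a - (antiderivative (q n)).eval a)
  have hf : ∀ n, derivative (f n) = q n := by simp [f, derivative_antiderivative]
  refine ⟨f, fun j hj => ?_⟩
  cases j with
  | zero =>
    refine tendstoUniformlyOn_Icc_of_hasDerivWithinAt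
      (fun n x _ => ((f n).hasDerivAt x).hasDerivWithinAt) (fun x hx => (hg x hx).hasDerivWithinAt)
      ?_ (fun n => by simp [f])
    simpa [hf] using hq 0 k.zero_le
  | succ j =>
    simpa only [Function.iterate_succ_apply, hf, iteratedDerivWithin_succ'] using hq j (by omega)

/-- Simultaneous uniform polynomial approximation of a `C^k` function and its derivatives
up to order `k` on a compact interval. -/
theorem stmt_4 {α β : ℝ} (hαβ : α < β) (k : ℕ) (g : ℝ → ℝ)
    (hg : ContDiffOn ℝ k g (Set.Icc α β)) :
    ∃ f : ℕ → Polynomial ℝ, ∀ j ≤ k,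
      TendstoUniformlyOn (fun n x => (Polynomial.derivative^[j] (f n)).eval x)
        (iteratedDerivWithin j g (Set.Icc α β)) Filter.atTop (Set.Icc α β) := by
  induction k generalizing g with
  | zero =>
    obtain ⟨p, hp⟩ := exists_seq_polynomial_tendstoUniformlyOn hg.continuousOn
    exact ⟨p, fun j hj => by obtain rfl := Nat.le_zero.mp hj; simpa using hp⟩
  | succ k ih =>
    obtain ⟨q, hq⟩ := ih _ (hg.derivWithin (uniqueDiffOn_Icc hαβ) (by norm_cast))
    exact exists_seq_polynomial_tendstoUniformlyOn_iteratedDerivWithin_succ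
      (hg.differentiableOn (by simp)) hq
end

section
/- Let η ∈ C^∞ on a compact interval [α, β] be nonvanishing on the open interval (α, β), and let ψ be a C^m function on [α, β] vanishing outside a compact subset of (α, β), for some m ∈ ℕ. Then there exists a sequence (f_n) of polynomials such that for every k = 0, …, m, the functions (f_n·η)^{(k)} converge to ψ^{(k)} uniformly on [α, β] (hence in L²([α, β])). -/
open Set Polynomial Filter intervalIntegral

noncomputable section Aux13

private lemma polyReal_contDiff13 (p : ℂ[X]) :
    ContDiff ℝ (⊤ : ℕ∞) (fun y : ℝ => p.eval (y : ℂ)) := by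
  induction p using Polynomial.induction_on' with
  | add p q hp hq => simpa [Polynomial.eval_add] using hp.add hq
  | monomial n a =>
      simpa [Polynomial.eval_monomial] using
        (contDiff_const (c := a)).mul ((Complex.ofRealCLM.contDiff).pow n)

private lemma polyReal_hasDerivAt13 (p : ℂ[X]) (y : ℝ) :
    HasDerivAt (fun x : ℝ => p.eval (x : ℂ)) (p.derivative.eval (y : ℂ)) y :=
  (p.hasDerivAt (y : ℂ)).comp_ofReal

private lemma iDW_poly13 {s : Set ℝ} (hs : UniqueDiffOn ℝ s) (p : ℂ[X]) (j : ℕ) :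
    ∀ x ∈ s, iteratedDerivWithin j (fun y : ℝ => p.eval (y : ℂ)) s x
      = (Polynomial.derivative^[j] p).eval (x : ℂ) := by
  induction j generalizing p with
  | zero => intro x hx; simp
  | succ j ih =>
    intro x hx
    rw [iteratedDerivWithin_succ', Function.iterate_succ_apply]
    calc iteratedDerivWithin j (derivWithin (fun y : ℝ => p.eval (y : ℂ)) s) s x
        = iteratedDerivWithin j (fun y : ℝ => p.derivative.eval (y : ℂ)) s x :=
          iteratedDerivWithin_congr
            (fun y hy => (polyReal_hasDerivAt13 p y).hasDerivWithinAt.derivWithin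
              (hs.uniqueDiffWithinAt hy)) hx
      _ = _ := ih p.derivative x hx

private def polyAnti13 (q : ℂ[X]) : ℂ[X] :=
  q.sum fun i a => Polynomial.C (a / (i + 1)) * X ^ (i + 1)

private lemma derivative_polyAnti13 (q : ℂ[X]) : Polynomial.derivative (polyAnti13 q) = q := by
  conv_rhs => rw [← q.sum_C_mul_X_pow_eq]
  rw [polyAnti13, Polynomial.sum, Polynomial.sum, map_sum]
  refine Finset.sum_congr rfl fun i _ => ?_
  rw [derivative_C_mul, derivative_X_pow]
  push_cast
  rw [← mul_assoc, ← Polynomial.C_mul, div_mul_cancel₀ _ (Nat.cast_add_one_ne_zero i)]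

private lemma weier13 {a b : ℝ} (f : ℝ → ℂ) (hf : ContinuousOn f (Icc a b))
    {ε : ℝ} (hε : 0 < ε) :
    ∃ p : ℂ[X], ∀ x ∈ Icc a b, ‖f x - p.eval (x : ℂ)‖ ≤ ε := by
  obtain ⟨pr, hpr⟩ := exists_polynomial_near_of_continuousOn a b (fun x => (f x).re)
    (Complex.continuous_re.comp_continuousOn hf) (ε / 2) (by positivity)
  obtain ⟨pi, hpi⟩ := exists_polynomial_near_of_continuousOn a b (fun x => (f x).im)
    (Complex.continuous_im.comp_continuousOn hf) (ε / 2) (by positivity)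
  refine ⟨pr.map Complex.ofRealHom + Polynomial.C Complex.I * pi.map Complex.ofRealHom,
    fun x hx => ?_⟩
  have h1 : (pr.map (Complex.ofRealHom : ℝ →+* ℂ)).eval ((x : ℝ) : ℂ)
      = ((pr.eval x : ℝ) : ℂ) := by
    rw [eval_map]; exact eval₂_at_apply Complex.ofRealHom x
  have h2 : (pi.map (Complex.ofRealHom : ℝ →+* ℂ)).eval ((x : ℝ) : ℂ)
      = ((pi.eval x : ℝ) : ℂ) := by
    rw [eval_map]; exact eval₂_at_apply Complex.ofRealHom x
  set z := f x - (pr.map Complex.ofRealHom + Polynomial.C Complex.I *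
    pi.map Complex.ofRealHom).eval (x : ℂ) with hz
  have hre : z.re = (f x).re - pr.eval x := by
    simp [hz, h1, h2]
  have him : z.im = (f x).im - pi.eval x := by
    simp [hz, h1, h2]
  calc ‖z‖ ≤ |z.re| + |z.im| := Complex.norm_le_abs_re_add_abs_im z
    _ ≤ ε / 2 + ε / 2 := by
        rw [hre, him, abs_sub_comm ((f x).re), abs_sub_comm ((f x).im)]
        exact add_le_add (le_of_lt (hpr x hx)) (le_of_lt (hpi x hx))
    _ = ε := by ring

private lemma simul13 {a b : ℝ} (hab : a < b) (m : ℕ) :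
    ∀ g : ℝ → ℂ, ContDiffOn ℝ m g (Icc a b) → ∀ ε : ℝ, 0 < ε →
    ∃ p : ℂ[X], ∀ j ≤ m, ∀ x ∈ Icc a b,
      ‖iteratedDerivWithin j g (Icc a b) x - (Polynomial.derivative^[j] p).eval (x : ℂ)‖ ≤ ε := by
  induction m with
  | zero =>
    intro g hg ε hε
    obtain ⟨p, hp⟩ := weier13 g hg.continuousOn hε
    refine ⟨p, fun j hj x hx => ?_⟩
    obtain rfl : j = 0 := Nat.le_zero.mp hj
    simpa using hp x hx
  | succ m ih =>
    intro g hg ε hε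
    have hs : UniqueDiffOn ℝ (Icc a b) := uniqueDiffOn_Icc hab
    have hg' : ContDiffOn ℝ m (derivWithin g (Icc a b)) (Icc a b) :=
      hg.derivWithin hs (by exact_mod_cast le_rfl)
    have hden : (0 : ℝ) < 1 + (b - a) := by linarith
    set ε' := ε / (1 + (b - a)) with hε'def
    have hε'pos : 0 < ε' := div_pos hε hden
    obtain ⟨q, hq⟩ := ih (derivWithin g (Icc a b)) hg' ε' hε'pos
    set P : ℂ[X] := Polynomial.C (g a - (polyAnti13 q).eval (a : ℂ)) + polyAnti13 q with hPdef
    have hdP : Polynomial.derivative P = q := by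
      rw [hPdef, map_add, derivative_C, zero_add, derivative_polyAnti13]
    have hPa : P.eval (a : ℂ) = g a := by simp [hPdef]
    refine ⟨P, fun j hj x hx => ?_⟩
    match j with
    | 0 =>
      simp only [iteratedDerivWithin_zero, Function.iterate_zero, id_eq]
      have hax : a ≤ x := hx.1
      have hsub : Icc a x ⊆ Icc a b := Icc_subset_Icc le_rfl hx.2
      have hg'c : ContinuousOn (derivWithin g (Icc a b)) (Icc a b) := hg'.continuousOn
      have hdiff : ∀ y ∈ Ioo a x, HasDerivWithinAt g (derivWithin g (Icc a b) y) (Ioi y) y := by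
        intro y hy
        have hy' : y ∈ Icc a b := ⟨le_of_lt hy.1, le_trans (le_of_lt hy.2) hx.2⟩
        have hyo : y ∈ Ioo a b := ⟨hy.1, lt_of_lt_of_le hy.2 hx.2⟩
        have hd : DifferentiableWithinAt ℝ g (Icc a b) y :=
          hg.differentiableOn (by simp) y hy'
        exact hd.hasDerivWithinAt.mono_of_mem_nhdsWithin
          (mem_nhdsWithin_of_mem_nhds (Icc_mem_nhds hyo.1 hyo.2))
      have hint : IntervalIntegrable (derivWithin g (Icc a b)) MeasureTheory.volume a x :=
        (hg'c.mono hsub).intervalIntegrable_of_Icc hax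
      have hFTCg : ∫ y in a..x, derivWithin g (Icc a b) y = g x - g a :=
        integral_eq_sub_of_hasDeriv_right_of_le hax (hg.continuousOn.mono hsub) hdiff hint
      have hqc : Continuous (fun t : ℝ => q.eval (t : ℂ)) :=
        (polyReal_contDiff13 q).continuous
      have hqint : IntervalIntegrable (fun t : ℝ => q.eval (t : ℂ)) MeasureTheory.volume a x :=
        hqc.intervalIntegrable a x
      have hFTCP : ∫ y in a..x, q.eval (y : ℂ) = P.eval (x : ℂ) - P.eval (a : ℂ) := by
        refine integral_eq_sub_of_hasDeriv_right_of_le hax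
          ((polyReal_contDiff13 P).continuous.continuousOn)
          (fun y _ => ?_) hqint
        have := polyReal_hasDerivAt13 P y
        rw [hdP] at this
        exact this.hasDerivWithinAt
      have key : g x - P.eval (x : ℂ)
          = ∫ y in a..x, (derivWithin g (Icc a b) y - q.eval (y : ℂ)) := by
        rw [intervalIntegral.integral_sub hint hqint, hFTCg, hFTCP, hPa]; ring
      rw [key]
      have hb : ∀ y ∈ Set.uIoc a x, ‖derivWithin g (Icc a b) y - q.eval (y : ℂ)‖ ≤ ε' := by
        intro y hy
        rw [uIoc_of_le hax] at hy
        have hy' : y ∈ Icc a b := ⟨le_of_lt hy.1, le_trans hy.2 hx.2⟩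
        simpa using hq 0 (Nat.zero_le m) y hy'
      calc ‖∫ y in a..x, (derivWithin g (Icc a b) y - q.eval (y : ℂ))‖
          ≤ ε' * |x - a| := intervalIntegral.norm_integral_le_of_norm_le_const hb
        _ ≤ ε' * (b - a) := by
            apply mul_le_mul_of_nonneg_left _ hε'pos.le
            rw [abs_of_nonneg (by linarith)]
            linarith [hx.2]
        _ ≤ ε := by
            rw [hε'def, div_mul_eq_mul_div, div_le_iff₀ hden]
            nlinarith [hε.le]
    | (j + 1) =>
      rw [iteratedDerivWithin_succ', Function.iterate_succ_apply, hdP]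
      calc ‖iteratedDerivWithin j (derivWithin g (Icc a b)) (Icc a b) x
            - (Polynomial.derivative^[j] q).eval (x : ℂ)‖
          ≤ ε' := hq j (Nat.succ_le_succ_iff.mp hj) x hx
        _ ≤ ε := div_le_self hε.le (by linarith)

end Aux13

/-- Lemma 5.4 (single-interval case): if `η` is smooth on `[α, β]` and nonvanishing on `(α, β)`,
and `ψ` is `C^m` on `[α, β]` vanishing outside a compact subset of `(α, β)`, then there are
polynomials `f_n` with `(f_n·η)^{(k)} → ψ^{(k)}` uniformly on `[α, β]` for all `k ≤ m`. -/
theorem stmt_13 {α β : ℝ} (hαβ : α < β) (m : ℕ) (η ψ : ℝ → ℂ)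
    (hη : ContDiffOn ℝ (⊤ : ℕ∞) η (Set.Icc α β))
    (hηne : ∀ x ∈ Set.Ioo α β, η x ≠ 0)
    (hψ : ContDiffOn ℝ m ψ (Set.Icc α β))
    (hψsupp : ∃ K : Set ℝ, IsCompact K ∧ K ⊆ Set.Ioo α β ∧ ∀ x ∉ K, ψ x = 0) :
    ∃ f : ℕ → Polynomial ℂ, ∀ k ≤ m,
      TendstoUniformlyOn
        (fun n x => iteratedDerivWithin k (fun y : ℝ => (f n).eval (y : ℂ) * η y) (Set.Icc α β) x)
        (iteratedDerivWithin k ψ (Set.Icc α β)) Filter.atTop (Set.Icc α β) := by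
  have hs : UniqueDiffOn ℝ (Set.Icc α β) := uniqueDiffOn_Icc hαβ
  obtain ⟨K, hKc, hKsub, hKψ⟩ := hψsupp
  obtain ⟨a, b, hαa, hbβ, hout⟩ :
      ∃ a b : ℝ, α < a ∧ b < β ∧ ∀ x : ℝ, x ∉ Set.Icc a b → ψ x = 0 := by
    rcases K.eq_empty_or_nonempty with hK | hK
    · exact ⟨(α + β) / 2, (α + β) / 2, by linarith, by linarith,
        fun x _ => hKψ x (by simp [hK])⟩
    · exact ⟨sInf K, sSup K, (hKsub (hKc.sInf_mem hK)).1, (hKsub (hKc.sSup_mem hK)).2,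
        fun x hx => hKψ x fun hxK =>
          hx ⟨csInf_le hKc.bddBelow hxK, le_csSup hKc.bddAbove hxK⟩⟩
  set g : ℝ → ℂ := fun x => if x ∈ Set.Ioo α β then ψ x / η x else 0 with hgdef
  have hgIoo : ContDiffOn ℝ m g (Set.Ioo α β) := by
    have hdiv : ContDiffOn ℝ m (fun x => ψ x * (η x)⁻¹) (Set.Ioo α β) :=
      (hψ.mono Set.Ioo_subset_Icc_self).mul
        (((hη.of_le (by exact_mod_cast le_top)).mono Set.Ioo_subset_Icc_self).inv hηne)
    refine hdiv.congr ?_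
    intro x hx
    simp only [hgdef, if_pos hx]
    rw [div_eq_mul_inv]
  have hg0 : ∀ x, x ∉ Set.Icc a b → g x = 0 := by
    intro x hx
    by_cases h : x ∈ Set.Ioo α β
    · simp only [hgdef, if_pos h, hout x hx, zero_div]
    · simp only [hgdef, if_neg h]
  have hg : ContDiffOn ℝ m g (Set.Icc α β) := by
    intro x hx
    by_cases h : x ∈ Set.Ioo α β
    · exact ((hgIoo x h).contDiffAt (isOpen_Ioo.mem_nhds h)).contDiffWithinAt
    · have hU : ∀ y ∈ Set.Iio a ∪ Set.Ioi b, g y = 0 := by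
        intro y hy
        apply hg0
        intro hy'
        rcases hy with hy | hy
        · exact absurd hy'.1 (not_le.mpr hy)
        · exact absurd hy'.2 (not_le.mpr hy)
      have hxU : x ∈ Set.Iio a ∪ Set.Ioi b := by
        rw [Set.mem_Ioo] at h
        rcases not_and_or.mp h with h' | h'
        · exact Or.inl (lt_of_le_of_lt (not_lt.mp h') hαa)
        · exact Or.inr (lt_of_lt_of_le hbβ (not_lt.mp h'))
      have hev : g =ᶠ[nhds x] (fun _ => (0 : ℂ)) := by
        filter_upwards [((isOpen_Iio.union isOpen_Ioi)).mem_nhds hxU] with y hy using hU y hy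
      exact (contDiffWithinAt_const (c := (0 : ℂ))).congr_of_eventuallyEq
        (hev.filter_mono nhdsWithin_le_nhds) (hU x hxU)
  have hgη : ∀ x ∈ Set.Icc α β, g x * η x = ψ x := by
    intro x hx
    by_cases h : x ∈ Set.Ioo α β
    · simp only [hgdef, if_pos h]
      exact div_mul_cancel₀ _ (hηne x h)
    · have hψx : ψ x = 0 := by
        apply hout
        intro hab'
        exact h ⟨lt_of_lt_of_le hαa hab'.1, lt_of_le_of_lt hab'.2 hbβ⟩
      simp [hgdef, h, hψx]
  have happrox : ∀ n : ℕ, ∃ p : ℂ[X], ∀ j ≤ m, ∀ x ∈ Set.Icc α β,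
      ‖iteratedDerivWithin j g (Set.Icc α β) x
        - (Polynomial.derivative^[j] p).eval (x : ℂ)‖ ≤ 1 / (n + 1) :=
    fun n => simul13 hαβ m g hg (1 / (n + 1)) (by positivity)
  choose p hp using happrox
  have hηbd : ∀ i : ℕ, ∃ Ci : ℝ, 0 ≤ Ci ∧
      ∀ x ∈ Set.Icc α β, ‖iteratedDerivWithin i η (Set.Icc α β) x‖ ≤ Ci := by
    intro i
    obtain ⟨Ci, hCi⟩ := isCompact_Icc.exists_bound_of_continuousOn
      (hη.continuousOn_iteratedDerivWithin (by exact_mod_cast le_top) hs)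
    exact ⟨max Ci 0, le_max_right _ _, fun x hx => le_trans (hCi x hx) (le_max_left _ _)⟩
  choose Cf hCf0 hCf using hηbd
  refine ⟨p, fun k hk => ?_⟩
  set D := ∑ i ∈ Finset.range (k + 1), (k.choose i : ℝ) * Cf (k - i) with hDdef
  rw [Metric.tendstoUniformlyOn_iff]
  intro ε hε
  have htend : Tendsto (fun n : ℕ => (1 / (n + 1 : ℝ)) * D) atTop (nhds 0) := by
    simpa using tendsto_one_div_add_atTop_nhds_zero_nat.mul_const D
  filter_upwards [htend.eventually_lt_const hε] with n hn x hx
  rw [dist_eq_norm]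
  have hkm : (k : ℕ∞) ≤ (m : ℕ∞) := by exact_mod_cast hk
  have hηk : ContDiffOn ℝ k η (Set.Icc α β) := hη.of_le (by exact_mod_cast le_top)
  have hfk : ContDiffOn ℝ k (fun y : ℝ => (p n).eval (y : ℂ)) (Set.Icc α β) :=
    ((polyReal_contDiff13 (p n)).of_le (by exact_mod_cast le_top)).contDiffOn
  have hgk : ContDiffOn ℝ k g (Set.Icc α β) := hg.of_le (by exact_mod_cast hk)
  have h1 : iteratedDerivWithin k ψ (Set.Icc α β) x
      = iteratedDerivWithin k (fun y => g y * η y) (Set.Icc α β) x :=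
    iteratedDerivWithin_congr (fun y hy => (hgη y hy).symm) hx
  have h2 : iteratedDerivWithin k (fun y : ℝ => (p n).eval (y : ℂ) * η y) (Set.Icc α β) x
        - iteratedDerivWithin k (fun y => g y * η y) (Set.Icc α β) x
      = iteratedDerivWithin k (fun y : ℝ => ((p n).eval (y : ℂ) - g y) * η y)
          (Set.Icc α β) x := by
    rw [← iteratedDerivWithin_sub hx hs (hfk.mul hηk x hx) (hgk.mul hηk x hx)]
    congr 1
    funext y
    simp only [Pi.sub_apply]
    ring
  have hsubk : ContDiffOn ℝ k (fun y : ℝ => (p n).eval (y : ℂ) - g y) (Set.Icc α β) :=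
    hfk.sub hgk
  have hbound := norm_iteratedFDerivWithin_mul_le (𝕜 := ℝ) hsubk hηk hs hx
    (le_refl (k : WithTop ℕ∞))
  have hsum : ∑ i ∈ Finset.range (k + 1), (k.choose i : ℝ)
        * ‖iteratedFDerivWithin ℝ i (fun y : ℝ => (p n).eval (y : ℂ) - g y) (Set.Icc α β) x‖
        * ‖iteratedFDerivWithin ℝ (k - i) η (Set.Icc α β) x‖
      ≤ (1 / (n + 1 : ℝ)) * D := by
    rw [hDdef, Finset.mul_sum]
    refine Finset.sum_le_sum fun i hi => ?_
    have hik : i ≤ k := Nat.lt_succ_iff.mp (Finset.mem_range.mp hi)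
    have e1 : ‖iteratedFDerivWithin ℝ i
        (fun y : ℝ => (p n).eval (y : ℂ) - g y) (Set.Icc α β) x‖ ≤ 1 / (n + 1 : ℝ) := by
      rw [norm_iteratedFDerivWithin_eq_norm_iteratedDerivWithin]
      have hfi : ContDiffOn ℝ i (fun y : ℝ => (p n).eval (y : ℂ)) (Set.Icc α β) :=
        ((polyReal_contDiff13 (p n)).of_le (by exact_mod_cast le_top)).contDiffOn
      have hgi : ContDiffOn ℝ i g (Set.Icc α β) :=
        hg.of_le (by exact_mod_cast le_trans hik hk)
      have hsplit := iteratedDerivWithin_sub hx hs (hfi x hx) (hgi x hx)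
      have : iteratedDerivWithin i (fun y : ℝ => (p n).eval (y : ℂ) - g y) (Set.Icc α β) x
          = (Polynomial.derivative^[i] (p n)).eval (x : ℂ)
            - iteratedDerivWithin i g (Set.Icc α β) x := by
        rw [← iDW_poly13 hs (p n) i x hx, ← hsplit]
        rfl
      rw [this, norm_sub_rev]
      exact hp n i (le_trans hik hk) x hx
    have e2 : ‖iteratedFDerivWithin ℝ (k - i) η (Set.Icc α β) x‖ ≤ Cf (k - i) := by
      rw [norm_iteratedFDerivWithin_eq_norm_iteratedDerivWithin]
      exact hCf (k - i) x hx
    calc (k.choose i : ℝ)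
          * ‖iteratedFDerivWithin ℝ i (fun y : ℝ => (p n).eval (y : ℂ) - g y) (Set.Icc α β) x‖
          * ‖iteratedFDerivWithin ℝ (k - i) η (Set.Icc α β) x‖
        ≤ (k.choose i : ℝ) * (1 / (n + 1 : ℝ)) * Cf (k - i) := by
          gcongr
      _ = 1 / (n + 1 : ℝ) * ((k.choose i : ℝ) * Cf (k - i)) := by ring
  rw [norm_sub_rev, h1, h2, ← norm_iteratedFDerivWithin_eq_norm_iteratedDerivWithin]
  exact lt_of_le_of_lt (le_trans hbound hsum) hn
end
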